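/- arXiv:2510.23735 — 5 statements merged into one kernel-verified Lean document; each statement's English description precedes it below -/
import Mathlib

section
/- For the vanishing ideal I(Z_{n,m}) of the locus Z_{n,m} of all 0/1 matrices in Mat_{n×m}(C) with at most one nonzero entry in each row and column, the associated graded ideal gr I(Z_{n,m}) equals the ideal I_{n,m} generated by all products x_{i,j}x_{i,j'} and x_{i,j}x_{i',j} of variables sharing a row or column. -/
open MvPolynomial

/-- A rook placement on the `n × m` board. -/
def IsRookPlacement {n m : ℕ} (R : Finset (Fin n × Fin m)) : Prop :=
  ∀ p ∈ R, ∀ q ∈ R, p ≠ q → p.1 ≠ q.1 ∧ p.2 ≠ q.2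

/-- The associated graded ideal `gr I`, generated by the top-degree homogeneous
components `τ(f)` of all nonzero `f ∈ I`. -/
noncomputable def grIdeal {σ : Type*} (I : Ideal (MvPolynomial σ ℂ)) :
    Ideal (MvPolynomial σ ℂ) :=
  Ideal.span {g | ∃ f ∈ I, f ≠ 0 ∧ g = homogeneousComponent f.totalDegree f}

/-- The locus `Z_{n,m}` of all 0/1 matrices, viewed as points of `ℂ^{n×m}`,
with at most one nonzero entry in each row and column (matrices of rook
placements). -/
def rookLocus (n m : ℕ) : Set ((Fin n × Fin m) → ℂ) :=
  {z | ∃ R : Finset (Fin n × Fin m), IsRookPlacement R ∧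
        ∀ p, z p = if p ∈ R then 1 else 0}

/-- The ideal `I_{n,m}` generated by all products of two variables in the same
row and all products of two variables in the same column. -/
noncomputable def idealInm (n m : ℕ) : Ideal (MvPolynomial (Fin n × Fin m) ℂ) :=
  Ideal.span
    ({f | ∃ (i : Fin n) (j j' : Fin m), f = X (i, j) * X (i, j')} ∪
     {f | ∃ (i i' : Fin n) (j : Fin m), f = X (i, j) * X (i', j)})

/-!
If `f` vanishes on `Z_{n,m}` and `S` is a rook placement, evaluating `f` at the indicator of `S`
gives the sum, over `T ⊆ S`, of the total coefficient of the monomials of `f` with support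
exactly `T`. Rook placements are closed under taking subsets, so Möbius inversion makes each of
these totals vanish. A monomial outside the monomial ideal `I_{n,m}` is squarefree with rook
support; if moreover it has top degree, it is the only monomial of `f` with that support, so its
coefficient vanishes and `τ(f) ∈ I_{n,m}`. Conversely, the generators `X p * X q` of `I_{n,m}`
are leading forms of `X p * X q` (`p ≠ q`) and `X p ^ 2 - X p`, which vanish on `Z_{n,m}`.
-/

namespace MvPolynomial

variable {σ R : Type*}

section CommSemiring

variable [CommSemiring R] [DecidableEq σ]

noncomputable def coeffSumOfSupport (f : MvPolynomial σ R) (S : Finset σ) : R :=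
  ∑ d ∈ f.support with d.support = S, coeff d f

theorem eval_indicator_eq_sum_coeffSumOfSupport (f : MvPolynomial σ R) (S : Finset σ) :
    eval (fun i => if i ∈ S then 1 else 0) f = ∑ T ∈ S.powerset, coeffSumOfSupport f T := by
  have hmon : ∀ d : σ →₀ ℕ, ∏ i ∈ d.support, (if i ∈ S then (1 : R) else 0) ^ d i
      = if d.support ⊆ S then 1 else 0 := by
    intro d
    split_ifs with h
    · exact Finset.prod_eq_one fun i hi => by simp [h hi]
    · obtain ⟨i, hi, hiS⟩ := Finset.not_subset.mp h
      exact Finset.prod_eq_zero hi (by simp [hiS, Finsupp.mem_support_iff.mp hi])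
  simp only [coeffSumOfSupport, Finset.sum_fiberwise_eq_sum_filter, Finset.mem_powerset,
    eval_eq, hmon, mul_ite, mul_one, mul_zero, Finset.sum_ite, Finset.sum_const_zero, add_zero]

theorem coeff_eq_coeffSumOfSupport {f : MvPolynomial σ R} {d : σ →₀ ℕ}
    (hd : ∀ i, d i ≤ 1) (hdeg : f.totalDegree ≤ d.degree) :
    coeff d f = coeffSumOfSupport f d.support := by
  have hmem : ∀ e ∈ f.support, e.support = d.support → e = d := by
    intro e he hsupp
    have hde : d ≤ e := fun i => by
      by_cases hi : i ∈ d.support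
      · exact (hd i).trans
          (Nat.one_le_iff_ne_zero.mpr (Finsupp.mem_support_iff.mp (hsupp ▸ hi)))
      · simp [Finsupp.notMem_support_iff.mp hi]
    have he_deg : e.degree ≤ d.degree := (le_totalDegree he).trans hdeg
    obtain ⟨c, rfl⟩ := exists_add_of_le hde
    have hc : c.degree = 0 := by rw [map_add] at he_deg; omega
    rw [(Finsupp.degree_eq_zero_iff c).mp hc, add_zero]
  rw [coeffSumOfSupport, Finset.sum_eq_single d]
  · intro e he hne
    obtain ⟨he, hsupp⟩ := Finset.mem_filter.mp he
    exact absurd (hmem e he hsupp) hne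
  · intro hd'
    simpa using hd'

end CommSemiring

theorem coeffSumOfSupport_eq_zero [CommRing R] [DecidableEq σ] {f : MvPolynomial σ R}
    {P : Finset σ → Prop} (hP : ∀ ⦃S T⦄, T ⊆ S → P S → P T)
    (hf : ∀ S, P S → eval (fun i => if i ∈ S then 1 else 0) f = 0)
    (S : Finset σ) (hS : P S) :
    coeffSumOfSupport f S = 0 := by
  induction S using Finset.strongInduction with
  | H S ih =>
    have hproper : ∑ T ∈ S.powerset.erase S, coeffSumOfSupport f T = 0 :=
      Finset.sum_eq_zero fun T hT =>
        have hTS : T ⊆ S := Finset.mem_powerset.mp (Finset.mem_of_mem_erase hT)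
        ih T (hTS.ssubset_of_ne (Finset.ne_of_mem_erase hT)) (hP hTS hS)
    rw [← hf S hS, eval_indicator_eq_sum_coeffSumOfSupport,
      ← Finset.add_sum_erase _ _ (Finset.mem_powerset_self S), hproper, add_zero]

end MvPolynomial

theorem mem_grIdeal_of_add_mem {σ : Type*} {I : Ideal (MvPolynomial σ ℂ)}
    {g h : MvPolynomial σ ℂ} {k : ℕ} (hg : g.IsHomogeneous k) (hh : h.totalDegree < k)
    (hgh : g + h ∈ I) : g ∈ grIdeal I := by
  rcases eq_or_ne g 0 with rfl | hg0
  · exact zero_mem _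
  have hcomp : homogeneousComponent k (g + h) = g := by
    rw [map_add, homogeneousComponent_of_mem hg, if_pos rfl,
      homogeneousComponent_eq_zero _ _ hh, add_zero]
  have hdeg : (g + h).totalDegree = k := by
    refine le_antisymm ((totalDegree_add g h).trans (max_le (hg.totalDegree hg0).le hh.le)) ?_
    by_contra! hlt
    exact hg0 (hcomp ▸ homogeneousComponent_eq_zero _ _ hlt)
  refine Ideal.subset_span ⟨g + h, hgh, fun h0 => hg0 ?_, by rw [hdeg, hcomp]⟩
  rw [← hcomp, h0, map_zero]

section Rook

variable {n m : ℕ}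

theorem IsRookPlacement.subset {S T : Finset (Fin n × Fin m)} (hST : T ⊆ S)
    (hS : IsRookPlacement S) : IsRookPlacement T :=
  fun p hp q hq => hS p (hST hp) q (hST hq)

theorem coeffSumOfSupport_eq_zero_of_mem_vanishingIdeal
    {f : MvPolynomial (Fin n × Fin m) ℂ} (hf : f ∈ vanishingIdeal ℂ (rookLocus n m))
    {S : Finset (Fin n × Fin m)} (hS : IsRookPlacement S) : coeffSumOfSupport f S = 0 :=
  coeffSumOfSupport_eq_zero (fun _ _ => IsRookPlacement.subset)
    (fun T hT => hf _ ⟨T, hT, fun _ => rfl⟩) S hS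

theorem mem_idealInm_iff {f : MvPolynomial (Fin n × Fin m) ℂ} :
    f ∈ idealInm n m ↔ ∀ d ∈ f.support, ∃ p q : Fin n × Fin m,
      (p.1 = q.1 ∨ p.2 = q.2) ∧ Finsupp.single p 1 + Finsupp.single q 1 ≤ d := by
  have hspan : idealInm n m = Ideal.span ((fun e => monomial e (1 : ℂ)) ''
      {e | ∃ p q : Fin n × Fin m, (p.1 = q.1 ∨ p.2 = q.2) ∧
        Finsupp.single p 1 + Finsupp.single q 1 = e}) := by
    have hX : ∀ p q : Fin n × Fin m,
        X p * X q = monomial (Finsupp.single p 1 + Finsupp.single q 1) (1 : ℂ) :=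
      fun p q => by rw [X, X, monomial_mul, one_mul]
    rw [idealInm]
    congr 1
    ext f
    simp only [Set.mem_union, Set.mem_ofPred_eq, Set.mem_image, hX]
    constructor
    · rintro (⟨i, j, j', rfl⟩ | ⟨i, i', j, rfl⟩)
      exacts [⟨_, ⟨(i, j), (i, j'), Or.inl rfl, rfl⟩, rfl⟩,
        ⟨_, ⟨(i, j), (i', j), Or.inr rfl, rfl⟩, rfl⟩]
    · rintro ⟨_, ⟨⟨i, j⟩, ⟨i', j'⟩, (rfl | rfl), rfl⟩, rfl⟩
      exacts [Or.inl ⟨i, j, j', rfl⟩, Or.inr ⟨i, i', j, rfl⟩]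
  rw [hspan, mem_ideal_span_monomial_image]
  exact forall₂_congr fun d _ =>
    ⟨fun ⟨_, ⟨p, q, hpq, he⟩, hle⟩ => ⟨p, q, hpq, he ▸ hle⟩,
      fun ⟨p, q, hpq, hle⟩ => ⟨_, ⟨p, q, hpq, rfl⟩, hle⟩⟩

theorem isRookPlacement_support_of_not_exists_le {d : Fin n × Fin m →₀ ℕ}
    (hd : ¬ ∃ p q : Fin n × Fin m,
      (p.1 = q.1 ∨ p.2 = q.2) ∧ Finsupp.single p 1 + Finsupp.single q 1 ≤ d) :
    (∀ p, d p ≤ 1) ∧ IsRookPlacement d.support := by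
  push Not at hd
  refine ⟨fun p => ?_, fun p hp q hq hpq => ?_⟩
  · by_contra! h
    exact hd p p (Or.inl rfl) (by rw [← Finsupp.single_add]; exact Finsupp.single_le_iff.mpr h)
  · have hle : Finsupp.single p 1 + Finsupp.single q 1 ≤ d := by
      intro s
      rw [Finsupp.mem_support_iff] at hp hq
      simp only [Finsupp.add_apply, Finsupp.single_apply]
      split_ifs with h1 h2 <;> subst_vars <;> first | omega | exact absurd rfl hpq
    exact ⟨fun h => hd p q (Or.inl h) hle, fun h => hd p q (Or.inr h) hle⟩

theorem homogeneousComponent_totalDegree_mem_idealInm {f : MvPolynomial (Fin n × Fin m) ℂ}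
    (hf : f ∈ vanishingIdeal ℂ (rookLocus n m)) :
    homogeneousComponent f.totalDegree f ∈ idealInm n m := by
  rw [mem_idealInm_iff]
  intro d hd
  by_contra hbad
  obtain ⟨hsq, hrook⟩ := isRookPlacement_support_of_not_exists_le hbad
  rw [mem_support_iff, coeff_homogeneousComponent, ite_ne_right_iff] at hd
  obtain ⟨hdeg, hd⟩ := hd
  exact hd ((coeff_eq_coeffSumOfSupport hsq hdeg.ge).trans
    (coeffSumOfSupport_eq_zero_of_mem_vanishingIdeal hf hrook))

theorem X_mul_X_mem_grIdeal {p q : Fin n × Fin m} (hpq : p.1 = q.1 ∨ p.2 = q.2) :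
    X p * X q ∈ grIdeal (vanishingIdeal ℂ (rookLocus n m)) := by
  have hhom : (X p * X q : MvPolynomial _ ℂ).IsHomogeneous 2 :=
    (isHomogeneous_X ℂ p).mul (isHomogeneous_X ℂ q)
  rcases eq_or_ne p q with rfl | hne
  · refine mem_grIdeal_of_add_mem hhom (h := -X p) (by simp) ?_
    rintro z ⟨R, -, hz⟩
    simp only [aeval_eq_eval, map_add, map_mul, eval_X, hz, mul_ite, mul_one, mul_zero, map_neg]
    split_ifs <;> simp
  · refine mem_grIdeal_of_add_mem hhom (h := 0) (by simp) ?_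
    rintro z ⟨R, hR, hz⟩
    simp only [add_zero, aeval_eq_eval, map_mul, eval_X, hz, mul_ite, mul_one, mul_zero,
      ite_eq_right_iff, one_ne_zero, imp_false]
    exact fun hq hp => hpq.elim (hR p hp q hq hne).1 (hR p hp q hq hne).2

end Rook

/-- `gr I(Z_{n,m}) = I_{n,m}`, where `I(Z_{n,m})` is the vanishing
ideal of the rook-placement matrix locus. -/
theorem grVanishing_eq_idealInm (n m : ℕ) :
    grIdeal (MvPolynomial.vanishingIdeal ℂ (rookLocus n m)) = idealInm n m := by
  apply le_antisymm
  · rw [grIdeal, Ideal.span_le]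
    rintro _ ⟨f, hf, -, rfl⟩
    exact homogeneousComponent_totalDegree_mem_idealInm hf
  · rw [idealInm, Ideal.span_le]
    rintro _ (⟨i, j, j', rfl⟩ | ⟨i, i', j, rfl⟩)
    exacts [X_mul_X_mem_grIdeal (Or.inl rfl), X_mul_X_mem_grIdeal (Or.inr rfl)]
end

section
/- If r ≤ min(n,m), m−r < t ≤ m, and b_1,...,b_t ∈ [m] are distinct, then the sum over all ordered tuples of distinct indices i_1,...,i_t ∈ [n] of the product x_{i_1,b_1}···x_{i_t,b_t} lies in the ideal J_{n,m,r}. -/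
open MvPolynomial

/-- The ideal `J_{n,m,r}` generated by (a) all products of two variables in the
same row and (b) all products of `m−r+1` distinct column sums. -/
noncomputable def idealJ (n m r : ℕ) : Ideal (MvPolynomial (Fin n × Fin m) ℂ) :=
  Ideal.span
    ({f | ∃ (i : Fin n) (j j' : Fin m), f = X (i, j) * X (i, j')} ∪
     {f | ∃ js : Fin (m - r + 1) → Fin m, Function.Injective js ∧
            f = ∏ k, (∑ i, X (i, js k))})

/-!
Expanding the product of the column sums of `b_1, …, b_t` gives the sum of
`x_{i_1,b_1} ⋯ x_{i_t,b_t}` over all tuples `i`. That product lies in `J_{n,m,r}` because it is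
a multiple of the product of the first `m - r + 1` of its factors, and every term with a repeated
row index `i_k = i_{k'}` lies in `J_{n,m,r}` because it is a multiple of
`x_{i_k,b_k} x_{i_k,b_{k'}}`. Subtracting these terms leaves the sum over the tuples of distinct
indices.
-/

open Finset Function

theorem Fintype.prod_comp_dvd_prod_of_injective {ι κ M : Type*} [Fintype ι] [Fintype κ]
    [CommMonoid M] {e : ι → κ} (he : Injective e) (f : κ → M) :
    ∏ i, f (e i) ∣ ∏ j, f j := by
  classical
  rw [← prod_image he.injOn]
  exact prod_dvd_prod_of_subset _ _ _ (subset_univ _)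

theorem sum_filter_mem_of_sum_mem {M S ι : Type*} [AddCommGroup M] [SetLike S M]
    [AddSubgroupClass S M] {p : S} {s : Finset ι} (q : ι → Prop) [DecidablePred q]
    {f : ι → M} (hs : ∑ x ∈ s, f x ∈ p) (hf : ∀ x ∈ s, ¬ q x → f x ∈ p) :
    ∑ x ∈ s.filter q, f x ∈ p := by
  rw [← sum_filter_add_sum_filter_not s q f] at hs
  refine (add_mem_cancel_right (sum_mem fun x hx => ?_)).1 hs
  exact hf x (mem_filter.1 hx).1 (mem_filter.1 hx).2

section idealJ

variable {n m r : ℕ}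

theorem X_mul_X_mem_idealJ (i : Fin n) (j j' : Fin m) :
    X (i, j) * X (i, j') ∈ idealJ n m r :=
  Ideal.subset_span (Or.inl ⟨i, j, j', rfl⟩)

theorem prod_colSum_mem_idealJ {t : ℕ} {b : Fin t → Fin m} (hb : Injective b)
    (ht : m - r < t) : ∏ k, ∑ i : Fin n, X (i, b k) ∈ idealJ n m r := by
  have hle : m - r + 1 ≤ t := ht
  refine Ideal.mem_of_dvd _ (Fintype.prod_comp_dvd_prod_of_injective
    (Fin.castLE_injective hle) fun k => ∑ i : Fin n, X (i, b k)) ?_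
  exact Ideal.subset_span (Or.inr ⟨b ∘ Fin.castLE hle, hb.comp (Fin.castLE_injective hle), rfl⟩)

theorem prod_X_mem_idealJ_of_not_injective {t : ℕ} (b : Fin t → Fin m) {i : Fin t → Fin n}
    (hi : ¬ Injective i) : ∏ k, X (i k, b k) ∈ idealJ n m r := by
  obtain ⟨k, k', hik, hkk'⟩ : ∃ k k', i k = i k' ∧ k ≠ k' := by
    simpa [Injective] using hi
  have hpair : (X (i k, b k) * X (i k, b k') : MvPolynomial (Fin n × Fin m) ℂ) =
      ∏ l ∈ {k, k'}, X (i l, b l) := by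
    rw [prod_pair hkk', hik]
  refine Ideal.mem_of_dvd _ ?_ (X_mul_X_mem_idealJ (i k) (b k) (b k'))
  rw [hpair]
  exact prod_dvd_prod_of_subset _ _ _ (subset_univ _)

end idealJ

theorem sum_distinct_products_mem_idealJ_general (n m r t : ℕ)
    (ht1 : m - r < t)
    (b : Fin t → Fin m) (hb : Function.Injective b) :
    (∑ i ∈ Finset.univ.filter
        (fun i : Fin t → Fin n => Function.Injective i),
      ∏ k, X (i k, b k)) ∈ idealJ n m r := by
  refine sum_filter_mem_of_sum_mem _ ?_
    fun i _ hi => prod_X_mem_idealJ_of_not_injective b hi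
  rw [← Fintype.prod_sum fun k (i : Fin n) => (X (i, b k) : MvPolynomial (Fin n × Fin m) ℂ)]
  exact prod_colSum_mem_idealJ hb ht1

/-- if `r ≤ min(n,m)`, `m − r < t ≤ m` and `b_1, …, b_t ∈ [m]` are
distinct, then `Σ_{i_1,…,i_t distinct in [n]} x_{i_1,b_1} ⋯ x_{i_t,b_t}`
lies in `J_{n,m,r}`. -/
theorem sum_distinct_products_mem_idealJ (n m r t : ℕ)
    (hr : r ≤ min n m) (ht1 : m - r < t) (ht2 : t ≤ m)
    (b : Fin t → Fin m) (hb : Function.Injective b) :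
    (∑ i ∈ Finset.univ.filter
        (fun i : Fin t → Fin n => Function.Injective i),
      ∏ k, X (i k, b k)) ∈ idealJ n m r :=
  sum_distinct_products_mem_idealJ_general n m r t ht1 b hb
end

section
/- Let r ≤ min(n,m) and let R be a rook placement on the n × m board of size at least r. Then the extended shadow set ES(R), i.e., the shadow set of the extended permutation EX(R) ∈ S_{n+m−r}, is contained in the upper-right n × m sub-board; in particular ES(R) is again a rook placement on the n × m board. -/
/-- The length of the longest increasing subsequence of `w ∈ S_N` (viewed via
its diagram `{(i, w(i))}`). -/
noncomputable def lis {N : ℕ} (w : Equiv.Perm (Fin N)) : ℕ :=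
  sSup {k | ∃ s : Finset (Fin N), s.card = k ∧
    ∀ a ∈ s, ∀ b ∈ s, a < b → w a < w b}

/-- The index of the Viennot shadow line through the point `(i, w(i))`:
the length of the longest increasing subsequence of `w` ending at position `i`.
(The first shadow line consists of the left-to-right minima, i.e. the points of
level 1; removing them, the second shadow line consists of the left-to-right
minima of the rest, i.e. the points of level 2; and so on.) -/
noncomputable def shadowLevel {N : ℕ} (w : Equiv.Perm (Fin N)) (i : Fin N) : ℕ :=
  sSup {k | ∃ s : Finset (Fin N), s.card = k ∧ i ∈ s ∧ (∀ a ∈ s, a ≤ i) ∧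
    ∀ a ∈ s, ∀ b ∈ s, a < b → w a < w b}

/-- The Viennot shadow set `S(w)`: the set of northeast corners of the shadow
lines of `w`.  A northeast corner arises from each pair of consecutive points
`(i, w(i))`, `(i', w(i'))` on a common shadow line, and is the point
`(i', w(i))`. -/
noncomputable def shadowSet {N : ℕ} (w : Equiv.Perm (Fin N)) :
    Set (Fin N × Fin N) :=
  {q | ∃ i i' : Fin N, i < i' ∧ shadowLevel w i = shadowLevel w i' ∧
    (∀ i'', i < i'' → i'' < i' → shadowLevel w i'' ≠ shadowLevel w i) ∧
    q = (i', w i)}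

/-- The index, in the extended `(n+m−r) × (n+m−r)` board, of the `i`-th column
of the original board (the `m−r` new columns are added on the left). -/
def colIdx (n m r : ℕ) (hr : r ≤ m) (i : Fin n) : Fin (n + m - r) :=
  ⟨m - r + i.val, by have := i.isLt; omega⟩

/-- The index, in the extended `(n+m−r) × (n+m−r)` board, of the `j`-th row of
the original board (the `n−r` new rows are added at the bottom). -/
def rowIdx (n m r : ℕ) (hr : r ≤ n) (j : Fin m) : Fin (n + m - r) :=
  ⟨n - r + j.val, by have := j.isLt; omega⟩

/-- `w ∈ S_{n+m−r}` is the extended permutation `EX(R)` of the rook placement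
`R`: its diagram restricted to the original board is exactly `R`, the values on
the `m−r` new columns form an increasing pattern, and the positions of the
values in the `n−r` new rows form an increasing pattern. -/
def IsExtension {n m r : ℕ} (hr1 : r ≤ n) (hr2 : r ≤ m)
    (R : Finset (Fin n × Fin m)) (w : Equiv.Perm (Fin (n + m - r))) : Prop :=
  (∀ (i : Fin n) (j : Fin m),
      (i, j) ∈ R ↔ w (colIdx n m r hr2 i) = rowIdx n m r hr1 j) ∧
  (∀ a b : Fin (n + m - r), a.val < m - r → b.val < m - r → a < b → w a < w b) ∧
  (∀ a b : Fin (n + m - r), (w a).val < n - r → (w b).val < n - r → a < b →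
      w a < w b)


/-!
Two consecutive points `(i, w i)`, `(i', w i')` of a shadow line satisfy `i < i'` and
`w i' < w i`, since a rise would put `i'` on a higher line. Hence the corner `(i', w i)` cannot
lie in a new column (the new columns carry an increasing pattern, and `i < i'`) nor in a new
row (the new rows carry an increasing pattern, and `w i' < w i`). Each point has at most one
successor and one predecessor on its shadow line, so distinct corners share neither a column
nor a row.
-/

section

variable {N : ℕ} (w : Equiv.Perm (Fin N))

lemma bddAbove_shadowLevel_set (i : Fin N) :
    BddAbove {k | ∃ s : Finset (Fin N), s.card = k ∧ i ∈ s ∧ (∀ a ∈ s, a ≤ i) ∧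
      ∀ a ∈ s, ∀ b ∈ s, a < b → w a < w b} :=
  ⟨N, by
    rintro k ⟨s, rfl, -⟩
    simpa using s.card_le_univ⟩

lemma exists_increasing_of_shadowLevel (i : Fin N) :
    ∃ s : Finset (Fin N), s.card = shadowLevel w i ∧ i ∈ s ∧ (∀ a ∈ s, a ≤ i) ∧
      ∀ a ∈ s, ∀ b ∈ s, a < b → w a < w b := by
  refine Nat.sSup_mem ?_ (bddAbove_shadowLevel_set w i)
  exact ⟨1, {i}, by simp⟩

/-- An increasing subsequence ending at `a` extends by `b`. -/
lemma shadowLevel_lt_of_lt {a b : Fin N} (hab : a < b) (hw : w a < w b) :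
    shadowLevel w a < shadowLevel w b := by
  obtain ⟨s, hcard, has, hle, hinc⟩ := exists_increasing_of_shadowLevel w a
  have hbs : b ∉ s := fun hb => (hle b hb).not_gt hab
  have hlt_b : ∀ x ∈ s, x < b ∧ w x < w b := fun x hx =>
    ⟨(hle x hx).trans_lt hab,
      (hle x hx).lt_or_eq.elim (fun h => (hinc x hx a has h).trans hw) (· ▸ hw)⟩
  refine Nat.lt_of_succ_le (le_csSup (bddAbove_shadowLevel_set w b)
    ⟨insert b s, by rw [Finset.card_insert_of_notMem hbs, hcard], s.mem_insert_self b, ?_, ?_⟩)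
  · simpa [Finset.forall_mem_insert] using fun x hx => (hlt_b x hx).1.le
  · simp only [Finset.forall_mem_insert, lt_irrefl, IsEmpty.forall_iff, true_and]
    exact ⟨fun y hy h => absurd h (hlt_b y hy).1.not_gt,
      fun x hx => ⟨fun _ => (hlt_b x hx).2, hinc x hx⟩⟩

lemma apply_lt_of_shadowLevel_eq {a b : Fin N} (hab : a < b)
    (h : shadowLevel w a = shadowLevel w b) : w b < w a :=
  (lt_or_gt_of_ne (w.injective.ne hab.ne)).resolve_left
    fun hw => (shadowLevel_lt_of_lt w hab hw).ne h

def ShadowSucc (i i' : Fin N) : Prop :=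
  i < i' ∧ shadowLevel w i = shadowLevel w i' ∧
    ∀ i'', i < i'' → i'' < i' → shadowLevel w i'' ≠ shadowLevel w i

lemma mem_shadowSet_iff {q : Fin N × Fin N} :
    q ∈ shadowSet w ↔ ∃ i i', ShadowSucc w i i' ∧ q = (i', w i) := by
  simp only [shadowSet, ShadowSucc, Set.mem_ofPred_eq, and_assoc]

variable {w}

lemma ShadowSucc.apply_lt {i i' : Fin N} (h : ShadowSucc w i i') : w i' < w i :=
  apply_lt_of_shadowLevel_eq w h.1 h.2.1

lemma ShadowSucc.left_unique {i j i' : Fin N} (hi : ShadowSucc w i i')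
    (hj : ShadowSucc w j i') : i = j := by
  by_contra hne
  rcases lt_or_gt_of_ne hne with hlt | hlt
  · exact hi.2.2 j hlt hj.1 (hj.2.1.trans hi.2.1.symm)
  · exact hj.2.2 i hlt hi.1 (hi.2.1.trans hj.2.1.symm)

lemma ShadowSucc.right_unique {i i' j' : Fin N} (hi : ShadowSucc w i i')
    (hj : ShadowSucc w i j') : i' = j' := by
  by_contra hne
  rcases lt_or_gt_of_ne hne with hlt | hlt
  · exact hj.2.2 i' hi.1 hlt hi.2.1.symm
  · exact hi.2.2 j' hj.1 hlt hj.2.1.symm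

lemma le_fst_of_mem_shadowSet {K : ℕ}
    (hinc : ∀ a b : Fin N, a.val < K → b.val < K → a < b → w a < w b)
    {q : Fin N × Fin N} (hq : q ∈ shadowSet w) : K ≤ q.1.val := by
  obtain ⟨i, i', h, rfl⟩ := (mem_shadowSet_iff w).1 hq
  by_contra! hi'
  exact h.apply_lt.not_gt (hinc i i' ((Fin.lt_def.1 h.1).trans hi') hi' h.1)

lemma le_snd_of_mem_shadowSet {K : ℕ}
    (hinc : ∀ a b : Fin N, (w a).val < K → (w b).val < K → a < b → w a < w b)
    {q : Fin N × Fin N} (hq : q ∈ shadowSet w) : K ≤ q.2.val := by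
  obtain ⟨i, i', h, rfl⟩ := (mem_shadowSet_iff w).1 hq
  by_contra! hi
  exact h.apply_lt.not_gt (hinc i i' hi ((Fin.lt_def.1 h.apply_lt).trans hi) h.1)

lemma eq_of_mem_shadowSet_of_fst_eq {q q' : Fin N × Fin N} (hq : q ∈ shadowSet w)
    (hq' : q' ∈ shadowSet w) (h : q.1 = q'.1) : q = q' := by
  obtain ⟨i, i', hi, rfl⟩ := (mem_shadowSet_iff w).1 hq
  obtain ⟨j, j', hj, rfl⟩ := (mem_shadowSet_iff w).1 hq'
  obtain rfl : i' = j' := h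
  rw [hi.left_unique hj]

lemma eq_of_mem_shadowSet_of_snd_eq {q q' : Fin N × Fin N} (hq : q ∈ shadowSet w)
    (hq' : q' ∈ shadowSet w) (h : q.2 = q'.2) : q = q' := by
  obtain ⟨i, i', hi, rfl⟩ := (mem_shadowSet_iff w).1 hq
  obtain ⟨j, j', hj, rfl⟩ := (mem_shadowSet_iff w).1 hq'
  obtain rfl : i = j := w.injective h
  rw [hi.right_unique hj]

end

theorem extendedShadow_in_board_general (n m r : ℕ) (hr1 : r ≤ n) (hr2 : r ≤ m)
    (R : Finset (Fin n × Fin m))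
    (w : Equiv.Perm (Fin (n + m - r))) (hw : IsExtension hr1 hr2 R w) :
    (∀ q ∈ shadowSet w, m - r ≤ q.1.val ∧ n - r ≤ q.2.val) ∧
    (∀ q ∈ shadowSet w, ∀ q' ∈ shadowSet w, q ≠ q' → q.1 ≠ q'.1 ∧ q.2 ≠ q'.2) := by
  obtain ⟨-, hcols, hrows⟩ := hw
  exact ⟨fun q hq => ⟨le_fst_of_mem_shadowSet hcols hq, le_snd_of_mem_shadowSet hrows hq⟩,
    fun q hq q' hq' hne => ⟨fun h => hne (eq_of_mem_shadowSet_of_fst_eq hq hq' h),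
      fun h => hne (eq_of_mem_shadowSet_of_snd_eq hq hq' h)⟩⟩

/-- for `r ≤ min(n,m)` and a rook placement `R` of size at least
`r` on the `n × m` board, the extended shadow set `ES(R)` — the Viennot shadow
set of the extended permutation `EX(R) ∈ S_{n+m−r}` — lies in the upper-right
`n × m` sub-board, and is again a rook placement (no two of its points share a
row or a column). -/
theorem extendedShadow_in_board (n m r : ℕ) (hr1 : r ≤ n) (hr2 : r ≤ m)
    (R : Finset (Fin n × Fin m)) (hR : IsRookPlacement R) (hcard : r ≤ R.card)
    (w : Equiv.Perm (Fin (n + m - r))) (hw : IsExtension hr1 hr2 R w) :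
    (∀ q ∈ shadowSet w, m - r ≤ q.1.val ∧ n - r ≤ q.2.val) ∧
    (∀ q ∈ shadowSet w, ∀ q' ∈ shadowSet w, q ≠ q' → q.1 ≠ q'.1 ∧ q.2 ≠ q'.2) :=
  extendedShadow_in_board_general n m r hr1 hr2 R w hw
end

section
/- Let d,a,b,p,q be nonnegative integers. Then in Λ ⊗ Λ: Σ_{μ⊢d} {s_μ·h_a}_{λ_1=p} ⊗ {s_μ·h_b}_{λ_1=q} = Σ_{μ⊢(d+a+b−max(p,q))} {s_μ·h_{max(p,q)−b}}_{λ_1=p} ⊗ {s_μ·h_{max(p,q)−a}}_{λ_1=q}. -/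
/-- An integer partition, recorded by its (finitely supported, weakly
decreasing) sequence of parts `λ_1 = part 0, λ_2 = part 1, …`. -/
structure Ptn where
  part : ℕ →₀ ℕ
  antitone' : ∀ i, part (i + 1) ≤ part i

/-- The size `|λ|` of a partition: the sum of its parts. -/
def Ptn.size (l : Ptn) : ℕ := l.part.sum fun _ v => v

/-- `IsPieri μ k λ` holds iff `λ` is obtained from `μ` by adding a horizontal
strip of size `k` (for `k : ℤ`; impossible when `k < 0`), i.e. iff `s_λ` occurs
in the Pieri expansion of `s_μ · h_k`.  By convention `h_k = 0` for `k < 0`. -/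
def IsPieri (m : Ptn) (k : ℤ) (l : Ptn) : Prop :=
  (l.size : ℤ) = m.size + k ∧ (∀ i, m.part i ≤ l.part i) ∧
    ∀ i, l.part (i + 1) ≤ m.part i

/-!
Fix `λ¹, λ²`. A partition `μ` counted on either side interlaces both, i.e.
`max(λ¹_{i+1}, λ²_{i+1}) ≤ μ_i ≤ min(λ¹_i, λ²_i)` for all `i`, and on these `μ` the reflection
`μ_i ↦ min(λ¹_i, λ²_i) + max(λ¹_{i+1}, λ²_{i+1}) - μ_i` is an involution. Since `min + max` of
two numbers is their sum, the reflection telescopes to `|μ| + |μ'| = |λ¹| + |λ²| - max(λ¹_1, λ²_1)`,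
which is exactly the change of strip sizes between the two sides.
-/

namespace Ptn

attribute [ext] Ptn

theorem antitone (l : Ptn) : Antitone l.part :=
  antitone_nat_of_succ_le l.antitone'

theorem eventually_part_eq_zero (l : Ptn) : ∀ᶠ i in Filter.atTop, l.part i = 0 := by
  rw [← Nat.cofinite_eq_atTop]
  filter_upwards [l.part.hasFiniteSupport.eventually_cofinite_notMem] with i hi
  simpa using hi

theorem size_eq_sum_range {l : Ptn} {N : ℕ} (hN : l.part N = 0) :
    l.size = ∑ i ∈ Finset.range N, l.part i := by
  refine Finsupp.sum_of_support_subset _ (fun i hi => ?_) _ (fun _ _ => rfl)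
  rw [Finset.mem_range]
  by_contra! hNi
  exact (Finsupp.mem_support_iff.mp hi) (Nat.eq_zero_of_le_zero (hN ▸ l.antitone hNi))

/-- `l / m` is a horizontal strip. -/
def Interlaces (m l : Ptn) : Prop :=
  (∀ i, m.part i ≤ l.part i) ∧ ∀ i, l.part (i + 1) ≤ m.part i

section Reflect

variable {l1 l2 m : Ptn}

noncomputable def reflect (h1 : m.Interlaces l1) (h2 : m.Interlaces l2) : Ptn where
  part := Finsupp.onFinset (l1.part.support ∪ l2.part.support)
    (fun i => min (l1.part i) (l2.part i) + max (l1.part (i + 1)) (l2.part (i + 1)) - m.part i)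
    (fun i hi => by
      have := l1.antitone' i
      have := l2.antitone' i
      simp only [Finset.mem_union, Finsupp.mem_support_iff]
      omega)
  antitone' i := by
    have := h1.1 i; have := h1.2 (i + 1); have := h2.1 i; have := h2.2 (i + 1)
    simp only [Finsupp.onFinset_apply]
    omega

@[simp]
theorem reflect_part (h1 : m.Interlaces l1) (h2 : m.Interlaces l2) (i : ℕ) :
    (reflect h1 h2).part i =
      min (l1.part i) (l2.part i) + max (l1.part (i + 1)) (l2.part (i + 1)) - m.part i :=
  rfl

theorem interlaces_reflect_left (h1 : m.Interlaces l1) (h2 : m.Interlaces l2) :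
    (reflect h1 h2).Interlaces l1 := by
  constructor <;> intro i <;> have := h1.1 i <;> have := h1.2 i <;> have := h2.1 i <;>
    have := h2.2 i <;> simp only [reflect_part] <;> omega

theorem interlaces_reflect_right (h1 : m.Interlaces l1) (h2 : m.Interlaces l2) :
    (reflect h1 h2).Interlaces l2 := by
  constructor <;> intro i <;> have := h1.1 i <;> have := h1.2 i <;> have := h2.1 i <;>
    have := h2.2 i <;> simp only [reflect_part] <;> omega

theorem reflect_reflect (h1 : m.Interlaces l1) (h2 : m.Interlaces l2) :
    reflect (interlaces_reflect_left h1 h2) (interlaces_reflect_right h1 h2) = m := by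
  ext i
  have := h1.1 i; have := h1.2 i; have := h2.1 i; have := h2.2 i
  simp only [reflect_part]
  omega

theorem size_reflect_add_size (h1 : m.Interlaces l1) (h2 : m.Interlaces l2) :
    (reflect h1 h2).size + m.size + max (l1.part 0) (l2.part 0) = l1.size + l2.size := by
  obtain ⟨N, hN1, hN2⟩ := (l1.eventually_part_eq_zero.and l2.eventually_part_eq_zero).exists
  have hmN : m.part N = 0 := Nat.eq_zero_of_le_zero (hN1 ▸ h1.1 N)
  have hrN : (reflect h1 h2).part N = 0 := by
    have := h1.2 N; have := h2.2 N
    simp only [reflect_part]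
    omega
  rw [size_eq_sum_range hrN, size_eq_sum_range hmN, size_eq_sum_range hN1,
    size_eq_sum_range hN2, ← Finset.sum_add_distrib, ← Finset.sum_add_distrib]
  have telescope : ∑ i ∈ Finset.range N, max (l1.part (i + 1)) (l2.part (i + 1)) +
      max (l1.part 0) (l2.part 0) = ∑ i ∈ Finset.range N, max (l1.part i) (l2.part i) := by
    rw [← Finset.sum_range_succ' (fun i => max (l1.part i) (l2.part i)), Finset.sum_range_succ,
      hN1, hN2, max_self, add_zero]
  calc ∑ i ∈ Finset.range N, ((reflect h1 h2).part i + m.part i) + max (l1.part 0) (l2.part 0)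
      = ∑ i ∈ Finset.range N, min (l1.part i) (l2.part i) +
          (∑ i ∈ Finset.range N, max (l1.part (i + 1)) (l2.part (i + 1)) +
            max (l1.part 0) (l2.part 0)) := by
        rw [← add_assoc, ← Finset.sum_add_distrib]
        congr 1
        refine Finset.sum_congr rfl fun i _ => ?_
        have := h1.1 i; have := h1.2 i; have := h2.1 i; have := h2.2 i
        simp only [reflect_part]
        omega
    _ = ∑ i ∈ Finset.range N, (l1.part i + l2.part i) := by
        rw [telescope, ← Finset.sum_add_distrib]
        simp only [min_add_max]

noncomputable def reflectEquiv (l1 l2 : Ptn) :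
    {m : Ptn // m.Interlaces l1 ∧ m.Interlaces l2} ≃
      {m : Ptn // m.Interlaces l1 ∧ m.Interlaces l2} :=
  Function.Involutive.toPerm
    (fun m => ⟨reflect m.2.1 m.2.2, interlaces_reflect_left _ _, interlaces_reflect_right _ _⟩)
    (fun m => Subtype.ext (reflect_reflect m.2.1 m.2.2))

end Reflect

end Ptn

open Ptn

theorem isPieri_iff {m l : Ptn} {k : ℤ} :
    IsPieri m k l ↔ (l.size : ℤ) = m.size + k ∧ m.Interlaces l :=
  Iff.rfl

theorem isPieri_pair_iff_reflect {d a b p q : ℕ} {l1 l2 m : Ptn}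
    (h1 : m.Interlaces l1) (h2 : m.Interlaces l2) :
    (m.size = d ∧ IsPieri m a l1 ∧ l1.part 0 = p ∧ IsPieri m b l2 ∧ l2.part 0 = q) ↔
      ((reflect h1 h2).size : ℤ) = d + a + b - max p q ∧
        IsPieri (reflect h1 h2) (max p q - b) l1 ∧ l1.part 0 = p ∧
        IsPieri (reflect h1 h2) (max p q - a) l2 ∧ l2.part 0 = q := by
  have hsize := size_reflect_add_size h1 h2
  simp only [isPieri_iff, h1, h2, interlaces_reflect_left, interlaces_reflect_right, and_true]
  constructor <;> rintro ⟨hd, hs1, rfl, hs2, rfl⟩ <;> omega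

/- Since the `s_λ ⊗ s_μ` form a basis of `Λ ⊗ Λ`, the identity is stated coefficientwise: by
Pieri's rule the coefficient of `s_{λ¹} ⊗ s_{λ²}` on each side counts the partitions `μ` of the
appropriate size from which `λ¹` and `λ²` arise by adding the relevant horizontal strips. -/
theorem schur_interchange (d a b p q : ℕ) (l1 l2 : Ptn) :
    Nat.card {mu : Ptn // mu.size = d ∧
        IsPieri mu a l1 ∧ l1.part 0 = p ∧ IsPieri mu b l2 ∧ l2.part 0 = q} =
    Nat.card {mu : Ptn // (mu.size : ℤ) = d + a + b - max p q ∧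
        IsPieri mu (max p q - b) l1 ∧ l1.part 0 = p ∧
        IsPieri mu (max p q - a) l2 ∧ l2.part 0 = q} := by
  refine Nat.card_congr <|
    (Equiv.subtypeSubtypeEquivSubtype fun h => ⟨h.2.1.2, h.2.2.2.1.2⟩).symm.trans <|
    ((reflectEquiv l1 l2).subtypeEquiv fun m => isPieri_pair_iff_reflect m.2.1 m.2.2).trans <|
    Equiv.subtypeSubtypeEquivSubtype fun h => ⟨h.2.1.2, h.2.2.2.1.2⟩
end

section
/- Let d, a, b, p, q ≥ 0 and F = Σ_{μ⊢d} {s_μ·h_a}_{λ_1=p} ⊗ {s_μ·h_b}_{λ_1=q}. For partitions λ⁽¹⁾ ⊢ a+d with λ⁽¹⁾_1 = p and λ⁽²⁾ ⊢ b+d with λ⁽²⁾_1 = q satisfying min(λ⁽¹⁾_i, λ⁽²⁾_i) ≥ max(λ⁽¹⁾_{i+1}, λ⁽²⁾_{i+1}) for all i ≥ 1, the coefficient of s_{λ⁽¹⁾} ⊗ s_{λ⁽²⁾} in F equals the number of partitions μ ⊢ d with max(λ⁽¹⁾_{i+1}, λ⁽²⁾_{i+1}) ≤ μ_i ≤ min(λ⁽¹⁾_i,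 λ⁽²⁾_i) for all i; if any of the three conditions fails, the coefficient is 0. -/
/-- `l / mu` is a horizontal strip (of some size). -/
def Ptn.Interlaces_s16 (mu l : Ptn) : Prop :=
  ∀ i, l.part (i + 1) ≤ mu.part i ∧ mu.part i ≤ l.part i

theorem isPieri_iff_interlaces {mu l : Ptn} {k : ℤ} (hsize : (l.size : ℤ) = mu.size + k) :
    IsPieri mu k l ↔ mu.Interlaces_s16 l :=
  ⟨fun ⟨_, hle, hge⟩ i => ⟨hge i, hle i⟩,
    fun h => ⟨hsize, fun i => (h i).2, fun i => (h i).1⟩⟩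

theorem interlaces_and_interlaces_iff {mu l1 l2 : Ptn} :
    mu.Interlaces_s16 l1 ∧ mu.Interlaces_s16 l2 ↔
      ∀ i, max (l1.part (i + 1)) (l2.part (i + 1)) ≤ mu.part i ∧
        mu.part i ≤ min (l1.part i) (l2.part i) := by
  simp only [Ptn.Interlaces_s16, max_le_iff, le_min_iff]
  exact ⟨fun ⟨h1, h2⟩ i => ⟨⟨(h1 i).1, (h2 i).1⟩, (h1 i).2, (h2 i).2⟩,
    fun h => ⟨fun i => ⟨(h i).1.1, (h i).2.1⟩, fun i => ⟨(h i).1.2, (h i).2.2⟩⟩⟩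

theorem isPieri_and_isPieri_iff {d a b : ℕ} {mu l1 l2 : Ptn} (hs1 : l1.size = a + d)
    (hs2 : l2.size = b + d) (hd : mu.size = d) :
    IsPieri mu a l1 ∧ IsPieri mu b l2 ↔
      ∀ i, max (l1.part (i + 1)) (l2.part (i + 1)) ≤ mu.part i ∧
        mu.part i ≤ min (l1.part i) (l2.part i) := by
  rw [isPieri_iff_interlaces (by omega), isPieri_iff_interlaces (by omega),
    interlaces_and_interlaces_iff]

theorem schur_coef (d a b p q : ℕ) (l1 l2 : Ptn)
    (hs1 : l1.size = a + d) (hs2 : l2.size = b + d) :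
    ((l1.part 0 = p ∧ l2.part 0 = q ∧
        (∀ i, max (l1.part (i + 1)) (l2.part (i + 1)) ≤
          min (l1.part i) (l2.part i))) →
      Nat.card {mu : Ptn // mu.size = d ∧
          IsPieri mu a l1 ∧ l1.part 0 = p ∧ IsPieri mu b l2 ∧ l2.part 0 = q} =
      Nat.card {mu : Ptn // mu.size = d ∧
          ∀ i, max (l1.part (i + 1)) (l2.part (i + 1)) ≤ mu.part i ∧
            mu.part i ≤ min (l1.part i) (l2.part i)}) ∧
    (¬ (l1.part 0 = p ∧ l2.part 0 = q ∧
        (∀ i, max (l1.part (i + 1)) (l2.part (i + 1)) ≤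
          min (l1.part i) (l2.part i))) →
      Nat.card {mu : Ptn // mu.size = d ∧
          IsPieri mu a l1 ∧ l1.part 0 = p ∧ IsPieri mu b l2 ∧ l2.part 0 = q} = 0) := by
  refine ⟨fun ⟨hp, hq, _⟩ => Nat.card_congr (Equiv.subtypeEquivRight fun mu => ?_), fun hne => ?_⟩
  · refine and_congr_right fun hd => ?_
    rw [← isPieri_and_isPieri_iff hs1 hs2 hd]
    simp only [hp, hq, true_and, and_true]
  · rw [Nat.card_eq_zero]
    refine .inl ⟨fun ⟨mu, hd, h1, hp, h2, hq⟩ => hne ⟨hp, hq, fun i => ?_⟩⟩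
    have h := (isPieri_and_isPieri_iff hs1 hs2 hd).1 ⟨h1, h2⟩ i
    exact h.1.trans h.2
end
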